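/- Quadrilateral case, nonnegative truncated areas: (i) for all ρ ∈ [0.1, 0.85] and t ∈ [0, 0.168], I(circPerim0(ρπ/3), 4, t, ρ) > 0, i.e., √(4π·(ρπ/3) − (ρπ/3)²) − t·B' + p₅' − ρ·p₅ > 0; and (ii) for all ρ ∈ [0.85, 1] and t ∈ [0, 0.168], I(regPerim(ρπ/3 − t, 4), 4, t, ρ) > 0, i.e., regPerim(ρπ/3 − t, 4) − t·B' + p₅' − ρ·p₅ > 0. -/

import Mathlib

open Real

/-- Perimeter of a regular spherical `n`-gon of area `x` on the unit sphere. -/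
noncomputable def regPerim (x n : ℝ) : ℝ :=
  n * Real.arccos ((Real.cos (2 * π / n) +
      (Real.cos ((π - (2 * π - x) / n) / 2)) ^ 2) /
      (Real.sin ((π - (2 * π - x) / n) / 2)) ^ 2)

/-- Circumference of a circle on the unit sphere enclosing area `a`. -/
noncomputable def circPerim0 (a : ℝ) : ℝ := Real.sqrt (4 * π * a - a ^ 2)

/-- Perimeter of the regular spherical pentagon of area `π/3`. -/
noncomputable def p5 : ℝ := 5 * Real.arccos ((4 * Real.cos (2 * π / 5) + 1) / 3)

/-- Derivative at `n = 5` of `n ↦ regPerim (π/3) n`. -/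
noncomputable def p5' : ℝ := deriv (fun n : ℝ => regPerim (π / 3) n) 5

/-- `B' = -∂₁ regPerim (π/3, 5)`. -/
noncomputable def B' : ℝ := - deriv (fun x : ℝ => regPerim x 5) (π / 3)

/-- The isoperimetric functional `I(ℓ, n, t, ρ)`. -/
noncomputable def Ifun (ℓ n t ρ : ℝ) : ℝ := ℓ - t * B' + (5 - n) * p5' - ρ * p5

/-!
For four sides, `regPerim x 4 = 8 * arctan √(sin (x / 4))`, a composition of concave increasing
functions with the concave function `sin (x / 4)`; so in case (ii) the functional is concave in
`(ρ, t)` and it suffices to check it at the four corners of the rectangle. The constants have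
closed forms, `p5 = 5 * arccos (√5 / 3)`, `B' = -√3 (3 + √5) / 6` and
`p5' = arccos (√5 / 3) + π (√3 (3 + √5) / 18 - 4 / 5 * sin (2π / 5))`, bounded with low-order
Taylor estimates. Case (i) is a quadratic inequality in `ρ` once the square root is squared.
-/

open Set

namespace Real

theorem cos_le_quartic {x : ℝ} (hx₀ : 0 ≤ x) (hx : x ≤ 2) :
    cos x ≤ 1 - x ^ 2 / 2 + x ^ 4 / 24 := by
  obtain ⟨h, rfl⟩ : ∃ h, x = 2 * h := ⟨x / 2, by ring⟩
  have h₀ : 0 ≤ h := by linarith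
  have hcube : 0 ≤ h - h ^ 3 / 6 := by nlinarith [mul_nonneg h₀ (show 0 ≤ 6 - h ^ 2 by nlinarith)]
  have hsq := pow_le_pow_left₀ hcube (sin_ge_sub_cube h₀) 2
  rw [cos_two_mul_eq_one_sub]
  nlinarith [pow_nonneg h₀ 6]

theorem sextic_le_cos {x : ℝ} (hx₀ : 0 ≤ x) (hx : x ≤ 2) :
    1 - x ^ 2 / 2 + x ^ 4 / 24 - x ^ 6 / 600 ≤ cos x := by
  obtain ⟨h, rfl⟩ : ∃ h, x = 2 * h := ⟨x / 2, by ring⟩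
  have h₀ : 0 ≤ h := by linarith
  have h₁ : h ≤ 1 := by linarith
  have hs := (abs_le.1 (sin_bound (x := h) (by rwa [abs_of_nonneg h₀]))).2
  rw [abs_of_nonneg h₀] at hs
  have hsin₀ : 0 ≤ sin h := sin_nonneg_of_nonneg_of_le_pi h₀ (by linarith [pi_gt_three])
  have hsq := pow_le_pow_left₀ hsin₀ (show sin h ≤ h - h ^ 3 / 6 + h ^ 5 / 100 by linarith) 2
  rw [cos_two_mul_eq_one_sub]
  nlinarith [pow_nonneg h₀ 6, mul_nonneg (pow_nonneg h₀ 8) (show 0 ≤ 1 - h ^ 2 by nlinarith)]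

theorem le_arccos_of_le_cos {r y : ℝ} (hr₀ : 0 ≤ r) (hr : r ≤ π) (h : y ≤ cos r) :
    r ≤ arccos y :=
  (arccos_cos hr₀ hr).symm.le.trans (arccos_le_arccos h)

theorem arccos_le_of_cos_le {r y : ℝ} (hr₀ : 0 ≤ r) (hr : r ≤ π) (h : cos r ≤ y) :
    arccos y ≤ r :=
  (arccos_le_arccos h).trans (arccos_cos hr₀ hr).le

theorem concaveOn_arctan : ConcaveOn ℝ (Ici 0) arctan := by
  refine AntitoneOn.concaveOn_of_deriv (convex_Ici 0) continuous_arctan.continuousOn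
    differentiable_arctan.differentiableOn ?_
  rw [deriv_arctan, interior_Ici]
  intro x hx y _ hxy
  have := pow_le_pow_left₀ (le_of_lt hx) hxy 2
  dsimp only
  gcongr

theorem arccos_one_sub_div_one_add {s : ℝ} (hs : 0 ≤ s) :
    arccos ((1 - s) / (1 + s)) = 2 * arctan √s := by
  have hlt := arctan_lt_pi_div_two √s
  have hnn : 0 ≤ arctan √s := arctan_nonneg.2 (sqrt_nonneg s)
  refine arccos_eq_of_eq_cos (by positivity) (by linarith) ?_
  rw [cos_two_mul, cos_arctan, div_pow, one_pow, sq_sqrt (by positivity), sq_sqrt hs]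
  field_simp
  ring

theorem cos_two_pi_div_five : cos (2 * π / 5) = (√5 - 1) / 4 := by
  rw [show 2 * π / 5 = 2 * (π / 5) by ring, cos_two_mul, cos_pi_div_five]
  nlinarith [sq_sqrt (show (0 : ℝ) ≤ 5 by norm_num)]

end Real

theorem ConcaveOn.comp_of_mapsTo {E : Type*} [AddCommMonoid E] [Module ℝ E] {s : Set E}
    {t : Set ℝ} {f : E → ℝ} {g : ℝ → ℝ} (hg : ConcaveOn ℝ t g) (hg' : MonotoneOn g t)
    (hf : ConcaveOn ℝ s f) (hst : MapsTo f s t) : ConcaveOn ℝ s (g ∘ f) :=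
  ⟨hf.1, fun _ hx _ hy _ _ ha hb hab => (hg.2 (hst hx) (hst hy) ha hb hab).trans <|
    hg' (hg.1 (hst hx) (hst hy) ha hb hab) (hst (hf.1 hx hy ha hb hab)) (hf.2 hx hy ha hb hab)⟩

theorem ConcaveOn.exists_le_of_mem_Icc_prod_Icc {f : ℝ × ℝ → ℝ} {a b c d : ℝ} {p : ℝ × ℝ}
    (hf : ConcaveOn ℝ (Icc a b ×ˢ Icc c d) f) (hp : p ∈ Icc a b ×ˢ Icc c d) :
    ∃ q ∈ ({a, b} : Set ℝ) ×ˢ ({c, d} : Set ℝ), f q ≤ f p := by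
  have hab : a ≤ b := hp.1.1.trans hp.1.2
  have hcd : c ≤ d := hp.2.1.trans hp.2.2
  have hull : Icc a b ×ˢ Icc c d = convexHull ℝ (({a, b} : Set ℝ) ×ˢ ({c, d} : Set ℝ)) := by
    rw [convexHull_prod, convexHull_pair, convexHull_pair, segment_eq_Icc hab, segment_eq_Icc hcd]
  rw [hull] at hf hp
  exact hf.exists_le_of_mem_convexHull (subset_convexHull ℝ _) hp

theorem regPerim_four_eq_arccos {x : ℝ} (h : sin (x / 4) ≠ -1) :
    regPerim x 4 = 4 * arccos ((1 - sin (x / 4)) / (1 + sin (x / 4))) := by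
  have hφ : (π - (2 * π - x) / 4) / 2 = π / 4 + x / 8 := by ring
  have hcos : cos (π / 4 + x / 8) ^ 2 = (1 - sin (x / 4)) / 2 := by
    rw [cos_sq, show 2 * (π / 4 + x / 8) = x / 4 + π / 2 by ring, cos_add_pi_div_two]
    ring
  have hsin : sin (π / 4 + x / 8) ^ 2 = (1 + sin (x / 4)) / 2 := by
    rw [sin_sq, hcos]
    ring
  have h' : 1 + sin (x / 4) ≠ 0 := fun h0 => h (by linarith)
  rw [regPerim, hφ, hcos, hsin, show 2 * π / 4 = π / 2 by ring, cos_pi_div_two]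
  congr 2
  field_simp
  ring

theorem regPerim_four_eq_arctan {x : ℝ} (h : 0 ≤ sin (x / 4)) :
    regPerim x 4 = 8 * arctan √(sin (x / 4)) := by
  rw [regPerim_four_eq_arccos (by linarith), arccos_one_sub_div_one_add h]
  ring

theorem sin_div_four_nonneg {x : ℝ} (hx : x ∈ Icc 0 (4 * π)) : 0 ≤ sin (x / 4) :=
  sin_nonneg_of_nonneg_of_le_pi (by linarith [hx.1]) (by linarith [hx.2])

theorem concaveOn_regPerim_four : ConcaveOn ℝ (Icc 0 (4 * π)) (regPerim · 4) := by
  have hsin : ConcaveOn ℝ (Icc 0 (4 * π)) (fun x => sin (x / 4)) := by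
    have h := strictConcaveOn_sin_Icc.concaveOn.comp_linearMap ((4⁻¹ : ℝ) • LinearMap.id)
    have hpre : ⇑((4⁻¹ : ℝ) • LinearMap.id (R := ℝ) (M := ℝ)) ⁻¹' Icc 0 π = Icc 0 (4 * π) := by
      ext x
      simp only [mem_preimage, mem_Icc, LinearMap.smul_apply, LinearMap.id_apply, smul_eq_mul]
      constructor <;> rintro ⟨h₁, h₂⟩ <;> constructor <;> linarith
    rw [hpre] at h
    exact h.congr fun x _ => by simp [div_eq_inv_mul]
  have hsqrt := strictConcaveOn_sqrt.concaveOn.comp_of_mapsTo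
    (fun _ _ _ _ h => sqrt_le_sqrt h) hsin (fun _ hx => sin_div_four_nonneg hx)
  have harctan := (concaveOn_arctan.comp_of_mapsTo (arctan_mono.monotoneOn _) hsqrt
    (fun _ _ => sqrt_nonneg _)).smul (show (0 : ℝ) ≤ 8 by norm_num)
  exact harctan.congr fun x hx => (regPerim_four_eq_arctan (sin_div_four_nonneg hx)).symm

/-- The left side of `h` bounds the argument of `arccos` from above through
`a / 4 - (a / 4) ^ 3 / 6 ≤ sin (x / 4)`, and its right side is a lower bound for `cos r`. -/
theorem le_regPerim_four {a x r : ℝ} (ha : 0 ≤ a) (hax : a ≤ x) (hx : x ≤ 4)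
    (hr₀ : 0 ≤ r) (hr : r ≤ 2)
    (h : (1 - (a / 4 - (a / 4) ^ 3 / 6)) / (1 + (a / 4 - (a / 4) ^ 3 / 6)) ≤
      1 - r ^ 2 / 2 + r ^ 4 / 24 - r ^ 6 / 600) :
    4 * r ≤ regPerim x 4 := by
  have hσ₀ : 0 ≤ a / 4 - (a / 4) ^ 3 / 6 := by
    nlinarith [mul_nonneg ha (show 0 ≤ 96 - a ^ 2 by nlinarith)]
  have hσ : a / 4 - (a / 4) ^ 3 / 6 ≤ sin (x / 4) := by
    refine le_trans ?_ (sin_ge_sub_cube (by linarith))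
    nlinarith [mul_nonneg (sub_nonneg.2 hax) (show 0 ≤ 96 - (x ^ 2 + a * x + a ^ 2) by nlinarith)]
  have hquot : (1 - sin (x / 4)) / (1 + sin (x / 4)) ≤
      (1 - (a / 4 - (a / 4) ^ 3 / 6)) / (1 + (a / 4 - (a / 4) ^ 3 / 6)) := by
    rw [div_le_div_iff₀ (by linarith) (by linarith)]
    nlinarith
  rw [regPerim_four_eq_arccos (by linarith)]
  have := le_arccos_of_le_cos hr₀ (by linarith [pi_gt_three])
    (hquot.trans (h.trans (sextic_le_cos hr₀ hr)))
  linarith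

theorem sqrt_five_mem_Icc : √5 ∈ Icc 2.236 2.2361 :=
  ⟨(le_sqrt' (by norm_num)).2 (by norm_num), (sqrt_le_left (by norm_num)).2 (by norm_num)⟩

theorem pentagon_quot_eq :
    (cos (2 * π / 5) + cos (π / 3) ^ 2) / sin (π / 3) ^ 2 = √5 / 3 := by
  have h3 : (√3 / 2) ^ 2 = 3 / 4 := by
    rw [div_pow, sq_sqrt (by norm_num : (0 : ℝ) ≤ 3)]
    norm_num
  rw [cos_two_pi_div_five, cos_pi_div_three, sin_pi_div_three, h3]
  ring

theorem p5_eq : p5 = 5 * arccos (√5 / 3) := by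
  rw [p5, cos_two_pi_div_five]
  ring_nf

theorem arccos_sqrt_five_div_three_mem_Icc : arccos (√5 / 3) ∈ Icc 0.729 0.7304 := by
  have h5 := sqrt_five_mem_Icc
  constructor
  · refine le_arccos_of_le_cos (by norm_num) (by linarith [pi_gt_three]) ?_
    refine le_trans ?_ (sextic_le_cos (by norm_num) (by norm_num))
    linarith [h5.2]
  · refine arccos_le_of_cos_le (by norm_num) (by linarith [pi_gt_three]) ?_
    refine (cos_le_quartic (by norm_num) (by norm_num)).trans ?_
    linarith [h5.1]

theorem hasDerivAt_arccos_pentagon {c φ : ℝ → ℝ} {c' φ' x : ℝ} (hc : HasDerivAt c c' x)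
    (hφ : HasDerivAt φ φ' x) (hcx : c x = cos (2 * π / 5)) (hφx : φ x = π / 3) :
    HasDerivAt (fun y => arccos ((c y + cos (φ y) ^ 2) / sin (φ y) ^ 2))
      (√3 * (3 + √5) / 3 * φ' - 2 * c') x := by
  have hsin : sin (φ x) ^ 2 ≠ 0 := by rw [hφx, sin_pi_div_three]; positivity
  have hval : (c x + cos (φ x) ^ 2) / sin (φ x) ^ 2 = √5 / 3 := by
    rw [hcx, hφx, pentagon_quot_eq]
  have h5 := sqrt_five_mem_Icc
  have harccos := hasDerivAt_arccos (x := √5 / 3) (by linarith [h5.1]) (by linarith [h5.2])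
  rw [← hval] at harccos
  refine (harccos.comp x ((hc.add (hφ.cos.pow 2)).div (hφ.sin.pow 2) hsin)).congr_deriv ?_
  have h59 : √(1 - (√5 / 3) ^ 2) = 2 / 3 := by
    rw [div_pow, sq_sqrt (by norm_num : (0 : ℝ) ≤ 5),
      show (1 : ℝ) - 5 / 3 ^ 2 = (2 / 3) ^ 2 by norm_num, sqrt_sq (by norm_num)]
  simp only [Pi.pow_apply, Pi.add_apply]
  rw [hval, h59]
  simp only [hcx, hφx, cos_pi_div_three, sin_pi_div_three, cos_two_pi_div_five, Nat.cast_ofNat]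
  have h3 : √3 ^ 2 = 3 := sq_sqrt (by norm_num)
  field_simp
  linear_combination (24 * √3 ^ 2 * c' - 12 * √3 ^ 3 * φ' - 4 * √5 * φ' * √3 * (√3 ^ 2 + 3)) * h3

theorem hasDerivAt_regPerim_five :
    HasDerivAt (regPerim · 5) (√3 * (3 + √5) / 6) (π / 3) := by
  have hφ : HasDerivAt (fun x : ℝ => (π - (2 * π - x) / 5) / 2) (1 / 10) (π / 3) :=
    ((((hasDerivAt_id' (π / 3)).const_sub (2 * π)).div_const 5).const_sub π).div_const 2
      |>.congr_deriv (by norm_num)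
  exact ((hasDerivAt_arccos_pentagon (hasDerivAt_const _ _) hφ rfl (by ring)).const_mul 5)
    |>.congr_deriv (by ring)

theorem hasDerivAt_regPerim_pi_div_three :
    HasDerivAt (regPerim (π / 3))
      (arccos (√5 / 3) + π * (√3 * (3 + √5) / 18 - 4 / 5 * sin (2 * π / 5))) 5 := by
  have hc : HasDerivAt (fun n : ℝ => cos (2 * π / n)) (sin (2 * π / 5) * (2 * π / 25)) 5 :=
    ((hasDerivAt_const (5 : ℝ) (2 * π)).fun_div (hasDerivAt_id' 5) (by norm_num)).cos
      |>.congr_deriv (by ring)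
  have hφ : HasDerivAt (fun n : ℝ => (π - (2 * π - π / 3) / n) / 2) (π / 30) 5 :=
    (((hasDerivAt_const (5 : ℝ) (2 * π - π / 3)).fun_div (hasDerivAt_id' 5)
      (by norm_num)).const_sub π).div_const 2 |>.congr_deriv (by ring)
  have hval : ((π - (2 * π - π / 3) / 5) / 2) = π / 3 := by ring
  exact ((hasDerivAt_id' (5 : ℝ)).mul (hasDerivAt_arccos_pentagon hc hφ rfl hval)).congr_deriv
    (by rw [hval, pentagon_quot_eq]; ring)

theorem B'_le : B' ≤ -1.51 := by
  have h3 : 1.732 ≤ √3 := (le_sqrt' (by norm_num)).2 (by norm_num)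
  rw [B', hasDerivAt_regPerim_five.deriv]
  nlinarith [sqrt_five_mem_Icc.1]

theorem p5_le : p5 ≤ 3.652 := by
  rw [p5_eq]
  linarith [arccos_sqrt_five_div_three_mem_Icc.2]

theorem sin_two_pi_div_five_le : sin (2 * π / 5) ≤ 0.9511 := by
  have h := sin_sq_add_cos_sq (2 * π / 5)
  rw [cos_two_pi_div_five] at h
  nlinarith [sqrt_five_mem_Icc.2, sq_sqrt (show (0 : ℝ) ≤ 5 by norm_num)]

theorem le_p5' : -0.08 ≤ p5' := by
  have h3 : 1.732 ≤ √3 := (le_sqrt' (by norm_num)).2 (by norm_num)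
  have hE : -0.2571 ≤ √3 * (3 + √5) / 18 - 4 / 5 * sin (2 * π / 5) := by
    nlinarith [sqrt_five_mem_Icc.1, sin_two_pi_div_five_le]
  rw [p5', hasDerivAt_regPerim_pi_div_three.deriv]
  nlinarith [arccos_sqrt_five_div_three_mem_Icc.1, pi_lt_d4, pi_pos]

theorem lt_circPerim0 {ρ : ℝ} (hρ : ρ ∈ Icc 0.1 0.85) :
    3.652 * ρ + 0.08 < circPerim0 (ρ * π / 3) := by
  obtain ⟨hρ₁, hρ₂⟩ := hρ
  rw [circPerim0, lt_sqrt (by positivity)]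
  have hπ₁ : 9.8596 ≤ π ^ 2 := by nlinarith [pi_gt_d2]
  have hπ₂ : π ^ 2 ≤ 9.9225 := by nlinarith [pi_lt_d2, pi_pos]
  nlinarith [mul_nonneg (sub_nonneg.2 hρ₁) (sub_nonneg.2 hρ₂),
    mul_nonneg (sub_nonneg.2 hπ₁) (show (0 : ℝ) ≤ ρ by linarith),
    mul_nonneg (sub_nonneg.2 hπ₂) (sq_nonneg ρ)]

theorem concaveOn_Ifun_regPerim_four (n : ℝ) :
    ConcaveOn ℝ {p : ℝ × ℝ | p.1 * π / 3 - p.2 ∈ Icc 0 (4 * π)}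
      (fun p => Ifun (regPerim (p.1 * π / 3 - p.2) 4) n p.2 p.1) := by
  let A : ℝ × ℝ →ₗ[ℝ] ℝ := (π / 3) • LinearMap.fst ℝ ℝ ℝ - LinearMap.snd ℝ ℝ ℝ
  let L : ℝ × ℝ →ₗ[ℝ] ℝ := (-B') • LinearMap.snd ℝ ℝ ℝ - p5 • LinearMap.fst ℝ ℝ ℝ
  have hA : ∀ p : ℝ × ℝ, A p = p.1 * π / 3 - p.2 := fun p => by
    simp only [A, LinearMap.sub_apply, LinearMap.smul_apply, LinearMap.fst_apply,
      LinearMap.snd_apply, smul_eq_mul]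
    ring
  have h := concaveOn_regPerim_four.comp_linearMap A
  have hset : A ⁻¹' Icc 0 (4 * π) = {p : ℝ × ℝ | p.1 * π / 3 - p.2 ∈ Icc 0 (4 * π)} := by
    ext p
    simp only [mem_preimage, hA]
    rfl
  rw [hset] at h
  refine ((h.add (L.concaveOn h.1)).add_const ((5 - n) * p5')).congr fun p _ => ?_
  simp only [Ifun, L, Pi.add_apply, Function.comp_apply, hA, LinearMap.sub_apply,
    LinearMap.smul_apply, LinearMap.fst_apply, LinearMap.snd_apply, smul_eq_mul]
  ring

theorem Ifun_regPerim_four_pos_of_corner {ρ t : ℝ} (hρ : ρ ∈ ({0.85, 1} : Set ℝ))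
    (ht : t ∈ ({0, 0.168} : Set ℝ)) : 0 < Ifun (regPerim (ρ * π / 3 - t) 4) 4 t ρ := by
  have := B'_le
  have := p5_le
  have := le_p5'
  have := pi_gt_d4
  have := pi_lt_d4
  rw [Ifun]
  rcases hρ with rfl | rfl <;> rcases ht with rfl | rfl
  · linarith [le_regPerim_four (a := 0.89) (x := 0.85 * π / 3 - 0) (r := 0.8)
      (by norm_num) (by linarith) (by linarith) (by norm_num) (by norm_num) (by norm_num)]
  · linarith [le_regPerim_four (a := 0.722) (x := 0.85 * π / 3 - 0.168) (r := 0.74)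
      (by norm_num) (by linarith) (by linarith) (by norm_num) (by norm_num) (by norm_num)]
  · linarith [le_regPerim_four (a := 1.0471) (x := 1 * π / 3 - 0) (r := 0.938)
      (by norm_num) (by linarith) (by linarith) (by norm_num) (by norm_num) (by norm_num)]
  · linarith [le_regPerim_four (a := 0.8791) (x := 1 * π / 3 - 0.168) (r := 0.873)
      (by norm_num) (by linarith) (by linarith) (by norm_num) (by norm_num) (by norm_num)]

theorem case_n4_T_nonneg :
    (∀ ρ ∈ Set.Icc (0.1 : ℝ) 0.85, ∀ t ∈ Set.Icc (0 : ℝ) 0.168,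
        Ifun (circPerim0 (ρ * π / 3)) 4 t ρ > 0) ∧
    (∀ ρ ∈ Set.Icc (0.85 : ℝ) 1, ∀ t ∈ Set.Icc (0 : ℝ) 0.168,
        Ifun (regPerim (ρ * π / 3 - t) 4) 4 t ρ > 0) := by
  refine ⟨fun ρ hρ t ht => ?_, fun ρ hρ t ht => ?_⟩
  · have := B'_le
    have := p5_le
    have := le_p5'
    have := lt_circPerim0 hρ
    rw [gt_iff_lt, Ifun]
    nlinarith [ht.1, hρ.1]
  · have hrect : Icc (0.85 : ℝ) 1 ×ˢ Icc (0 : ℝ) 0.168 ⊆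
        {p : ℝ × ℝ | p.1 * π / 3 - p.2 ∈ Icc 0 (4 * π)} := fun p ⟨⟨h₁, h₂⟩, ⟨h₃, h₄⟩⟩ =>
      ⟨by nlinarith [pi_gt_three], by nlinarith [pi_gt_three]⟩
    obtain ⟨⟨ρ', t'⟩, ⟨hρ', ht'⟩, hle⟩ :=
      ((concaveOn_Ifun_regPerim_four 4).subset hrect ((convex_Icc _ _).prod (convex_Icc _ _)))
        |>.exists_le_of_mem_Icc_prod_Icc (mk_mem_prod hρ ht)
    exact (Ifun_regPerim_four_pos_of_corner hρ' ht').trans_le hle
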